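/- The Haar state on a compact quantum group is unique: if h and h' are states on A both satisfying ξ ∗ h = h ∗ ξ = ξ(1) h for all continuous linear functionals ξ (equivalently a ∗ h = h ∗ a = h(a)·1 for all a ∈ A), then h = h'. -/

import Mathlib

open TensorProduct

noncomputable section

variable {A : Type*} [NormedRing A] [NormedAlgebra ℂ A] [StarRing A]
  [CStarRing A] [StarModule ℂ A]

/-- The convolution `ξ ∗ a = (id ⊗ ξ)Φ(a)` of a functional with an algebra element. -/
def convR (Φ : A →ₐ[ℂ] A ⊗[ℂ] A) (ξ : A →ₗ[ℂ] ℂ) (a : A) : A :=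
  (TensorProduct.rid ℂ A) ((TensorProduct.map LinearMap.id ξ) (Φ a))

/-- The convolution `a ∗ ξ = (ξ ⊗ id)Φ(a)`. -/
def convL (Φ : A →ₐ[ℂ] A ⊗[ℂ] A) (ξ : A →ₗ[ℂ] ℂ) (a : A) : A :=
  (TensorProduct.lid ℂ A) ((TensorProduct.map ξ LinearMap.id) (Φ a))

/-- A state on the C*-algebra `A`: a positive normalized linear functional. -/
def IsState (h : A →ₗ[ℂ] ℂ) : Prop :=
  h 1 = 1 ∧ ∀ a : A, ∃ r : ℝ, 0 ≤ r ∧ h (star a * a) = (r : ℂ)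

theorem apply_rid_map_id_eq_apply_lid_map_id {R M N : Type*} [CommSemiring R]
    [AddCommMonoid M] [Module R M] [AddCommMonoid N] [Module R N]
    (φ : M →ₗ[R] R) (ψ : N →ₗ[R] R) (x : M ⊗[R] N) :
    φ (TensorProduct.rid R M (TensorProduct.map LinearMap.id ψ x)) =
      ψ (TensorProduct.lid R N (TensorProduct.map φ LinearMap.id x)) := by
  induction x using TensorProduct.induction_on with
  | zero => simp
  | tmul m n => simp [mul_comm]
  | add x y hx hy => simp only [map_add, hx, hy]

/- Evaluate `(h' ⊗ h) Φ(a)` in two ways: slicing by `h` first gives `h' (h(a) 1) = h a`, slicing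
by `h'` first gives `h (h'(a) 1) = h' a`. -/
theorem haar_state_unique_general
    (Φ : A →ₐ[ℂ] A ⊗[ℂ] A)
    (h h' : A →ₗ[ℂ] ℂ) (hs : IsState h) (hs' : IsState h')
    (hHaar : ∀ a : A, convR Φ h a = h a • (1 : A) ∧ convL Φ h a = h a • (1 : A))
    (hHaar' : ∀ a : A, convR Φ h' a = h' a • (1 : A) ∧ convL Φ h' a = h' a • (1 : A)) :
    h = h' := by
  ext a
  calc h a = h' (convR Φ h a) := by rw [(hHaar a).1, map_smul, hs'.1, smul_eq_mul, mul_one]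
    _ = h (convL Φ h' a) := apply_rid_map_id_eq_apply_lid_map_id h' h (Φ a)
    _ = h' a := by rw [(hHaar' a).2, map_smul, hs.1, smul_eq_mul, mul_one]

/-- Uniqueness of the Haar state on a compact quantum group `G = (A, Φ)`:
if two states `h, h'` both satisfy `a ∗ h = h ∗ a = h(a)·1` for all `a ∈ A`,
then `h = h'`.  (The tensor product `A ⊗ A` carries the C*-topology, here an
arbitrary topological-space instance, used for the density axioms.) -/
theorem haar_state_unique [CompleteSpace A] [TopologicalSpace (A ⊗[ℂ] A)]
    (Φ : A →ₐ[ℂ] A ⊗[ℂ] A)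
    (hcoassoc : (Algebra.TensorProduct.assoc ℂ ℂ ℂ A A A).toAlgHom.comp
        ((Algebra.TensorProduct.map Φ (AlgHom.id ℂ A)).comp Φ) =
      (Algebra.TensorProduct.map (AlgHom.id ℂ A) Φ).comp Φ)
    (hdense₁ : Dense (Submodule.span ℂ
        {x : A ⊗[ℂ] A | ∃ b c : A, x = (b ⊗ₜ[ℂ] (1 : A)) * Φ c} : Set (A ⊗[ℂ] A)))
    (hdense₂ : Dense (Submodule.span ℂ
        {x : A ⊗[ℂ] A | ∃ b c : A, x = ((1 : A) ⊗ₜ[ℂ] b) * Φ c} : Set (A ⊗[ℂ] A)))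
    (h h' : A →ₗ[ℂ] ℂ) (hs : IsState h) (hs' : IsState h')
    (hHaar : ∀ a : A, convR Φ h a = h a • (1 : A) ∧ convL Φ h a = h a • (1 : A))
    (hHaar' : ∀ a : A, convR Φ h' a = h' a • (1 : A) ∧ convL Φ h' a = h' a • (1 : A)) :
    h = h' :=
  haar_state_unique_general Φ h h' hs hs' hHaar hHaar'

end
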